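/- For $t \geq 1$, let $\pi \in \overline{\mathcal{B}}^{=}_0(\alpha_1,\ldots,\alpha_\lambda;\eta,k,r|t)$ and let $\mu = D_t(\pi)$ be obtained by removing the overlined part $\overline{t\eta}$ if $s(\pi) = \overline{t\eta}$, and otherwise removing a non-overlined part $t\eta$. Then $\mu \in \overline{\mathcal{B}}^{>}_0(\alpha_1,\ldots,\alpha_\lambda;\eta,k,r|t)$, $|\mu| = |\pi| - t\eta$, and $\ell(\mu) = \ell(\pi) - 1$. -/

import Mathlib

/-- A part of an overpartition: a size together with a flag telling
whether the part is overlined. -/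
structure OPart where
  size : ℕ
  isOver : Bool
deriving DecidableEq

/-- The value of a part in the ordering `1̄ < 1 < 2̄ < 2 < ⋯`:
an overlined part of size `t` has value `2t - 1`, a non-overlined one `2t`. -/
def OPart.val (p : OPart) : ℕ := 2 * p.size - (if p.isOver then 1 else 0)

def dpart : OPart := ⟨0, false⟩

/-- value of the `i`-th part (0-based). -/
def pval (π : List OPart) (i : ℕ) : ℕ := (π.getD i dpart).val

def pover (π : List OPart) (i : ℕ) : Bool := (π.getD i dpart).isOver

def psize (π : List OPart) (i : ℕ) : ℕ := (π.getD i dpart).size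

/-- the weight `|π|`: the sum of the sizes of the parts. -/
def wt (π : List OPart) : ℕ := (π.map OPart.size).sum

/-- An overpartition: a sequence of positive parts, non-increasing in the
ordering `1̄ < 1 < 2̄ < 2 < ⋯`, in which each size is overlined at most once
(the overlined copy, being smallest among equal sizes, is the last occurrence). -/
def IsOverPartition (π : List OPart) : Prop :=
  List.Pairwise (fun p q : OPart => q.val ≤ p.val) π ∧
  (∀ p ∈ π, 0 < p.size) ∧
  (∀ t : ℕ, π.count (⟨t, true⟩ : OPart) ≤ 1)

/-- `{π_{i+l}}_{0 ≤ l ≤ m-1}` is an `m`-band of `π`: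
`π_i ≤ π_{i+m-1} + η`, with strict inequality if `π_i` is overlined. -/
def IsBand (η : ℕ) (π : List OPart) (m i : ℕ) : Prop :=
  i + m ≤ π.length ∧
  pval π i ≤ pval π (i + m - 1) + 2 * η ∧
  (pover π i = true → pval π i < pval π (i + m - 1) + 2 * η)

/-- `V̄_π(N)`: the number of overlined parts of value at most `N`
whose size is not divisible by `η`. -/
def Vbar (η : ℕ) (π : List OPart) (N : ℕ) : ℕ :=
  π.countP (fun p => p.isOver && decide (p.val ≤ N) && !(decide (p.size % η = 0)))

/-- `Ō_π(N)`: the number of overlined parts of value at least `N`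
whose size is divisible by `η`. -/
def Obar (η : ℕ) (π : List OPart) (N : ℕ) : ℕ :=
  π.countP (fun p => p.isOver && decide (N ≤ p.val) && decide (p.size % η = 0))

/-- `f_{≤η}(π)`: the number of parts not exceeding `η`. -/
def fLe (η : ℕ) (π : List OPart) : ℕ :=
  π.countP (fun p => decide (p.val ≤ 2 * η))

/-- `[|π_i|/η] + ⋯ + [|π_{i+m-1}|/η]`. -/
def bandSum (η : ℕ) (π : List OPart) (i m : ℕ) : ℕ :=
  ∑ l ∈ Finset.range m, psize π (i + l) / η

/-- Every part is congruent to `0, α_1, …, α_λ` modulo `η`. -/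
def CongParts (α : ℕ → ℕ) (lam η : ℕ) (π : List OPart) : Prop :=
  ∀ p ∈ π, p.size % η = 0 ∨ ∃ s, 1 ≤ s ∧ s ≤ lam ∧ p.size % η = α s

/-- The class `B̄(α_1,…,α_λ; η, k, r)`: conditions (1)–(4) of the definition
of `B̄₀`. -/
def InBbar (α : ℕ → ℕ) (lam η k r : ℕ) (π : List OPart) : Prop :=
  IsOverPartition π ∧
  CongParts α lam η π ∧
  (∀ p ∈ π, p.isOver = false → η ∣ p.size) ∧
  (∀ i, i + k ≤ π.length →
    pval π (i + k - 1) + 2 * η ≤ pval π i ∧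
    (pover π i = false → pval π (i + k - 1) + 2 * η < pval π i)) ∧
  fLe η π ≤ r

/-- An `m`-band at `i` is even:
`[|π_i|/η]+⋯+[|π_{i+m-1}|/η] ≡ r - 1 + V̄_π(π_i) + Ō_π(π_{i+m-1}) (mod 2)`. -/
def EvenBand (η r : ℕ) (π : List OPart) (m i : ℕ) : Prop :=
  Int.ModEq 2 (bandSum η π i m)
    ((r : ℤ) - 1 + (Vbar η π (pval π i) : ℤ) + (Obar η π (pval π (i + m - 1)) : ℤ))

/-- Condition (5) of the definition of `B̄₀`. -/
def Cond5 (η k r : ℕ) (π : List OPart) : Prop :=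
  fLe η π = r → (⟨η, true⟩ : OPart) ∉ π →
    ∃ i, IsBand η π (k - 1) i ∧ pval π i < 2 * (2 * η) - 1

/-- The class `B̄₀(α_1,…,α_λ; η, k, r)`: conditions (1)–(6). -/
def InB0 (α : ℕ → ℕ) (lam η k r : ℕ) (π : List OPart) : Prop :=
  InBbar α lam η k r π ∧ Cond5 η k r π ∧
  ∀ i, IsBand η π (k - 1) i → EvenBand η r π (k - 1) i

/-- `s(π) > t̄η`: every overlined part divisible by `η` has size `> tη`. -/
def SGt (η t : ℕ) (π : List OPart) : Prop :=
  ∀ p ∈ π, p.isOver = true → η ∣ p.size → t * η < p.size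

/-- `s(π) = t̄η`. -/
def SEq (η t : ℕ) (π : List OPart) : Prop :=
  (⟨t * η, true⟩ : OPart) ∈ π ∧
  ∀ p ∈ π, p.isOver = true → η ∣ p.size → t * η ≤ p.size

/-- `g(π) ≥ x` (value `x`): every part starting a `(k-1)`-band has value `≥ x`. -/
def GGe (η k : ℕ) (π : List OPart) (x : ℕ) : Prop :=
  ∀ i, IsBand η π (k - 1) i → x ≤ pval π i

/-- `g(π) < x`: some part starting a `(k-1)`-band has value `< x`. -/
def GLt (η k : ℕ) (π : List OPart) (x : ℕ) : Prop :=
  ∃ i, IsBand η π (k - 1) i ∧ pval π i < x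

/-- `π ∈ B̄₀^=(α_1,…,α_λ; η,k,r | t)`. -/
def InBeq (α : ℕ → ℕ) (lam η k r t : ℕ) (π : List OPart) : Prop :=
  InB0 α lam η k r π ∧
  ((SEq η t π ∧ GGe η k π (2 * (t * η) - 1)) ∨
   (SGt η t π ∧ GGe η k π (2 * (t * η)) ∧ GLt η k π (2 * ((t + 1) * η) - 1)))

/-- `π ∈ B̄₀^>(α_1,…,α_λ; η,k,r | t)`. -/
def InBgt (α : ℕ → ℕ) (lam η k r t : ℕ) (π : List OPart) : Prop :=
  InB0 α lam η k r π ∧ SGt η t π ∧ GGe η k π (2 * ((t + 1) * η) - 1)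

/-- An `m`-band belonging to the closed interval `[(t-1)η, (t+1)η]`. -/
def BandInC (η t : ℕ) (π : List OPart) (m i : ℕ) : Prop :=
  IsBand η π m i ∧ 2 * ((t - 1) * η) ≤ pval π (i + m - 1) ∧
  pval π i ≤ 2 * ((t + 1) * η)

/-- An `m`-band belonging to `[(t-1)η, \overline{(t+1)η})`. -/
def BandInO (η t : ℕ) (π : List OPart) (m i : ℕ) : Prop :=
  IsBand η π m i ∧ 2 * ((t - 1) * η) ≤ pval π (i + m - 1) ∧
  pval π i < 2 * ((t + 1) * η) - 1

/-- An `m`-band at `i` is of type N. -/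
def TypeN (η r t : ℕ) (π : List OPart) (m i : ℕ) : Prop :=
  Int.ModEq 2 (bandSum η π i m)
    ((t : ℤ) + (r : ℤ) - 1 + (Vbar η π (pval π i) : ℤ) +
      (Obar η π (pval π (i + m - 1)) : ℤ))

/-- `π` is obtained from `μ` by inserting the part `p`. -/
def InsertPart (μ : List OPart) (p : OPart) (π : List OPart) : Prop :=
  ∃ l1 l2, μ = l1 ++ l2 ∧ π = l1 ++ p :: l2

/-- The `(k-1)`-reduction `D_t` as a relation: `μ = D_t(π)`. -/
def DtRel (η t : ℕ) (π μ : List OPart) : Prop :=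
  ((⟨t * η, true⟩ : OPart) ∈ π ∧ InsertPart μ ⟨t * η, true⟩ π) ∨
  ((⟨t * η, true⟩ : OPart) ∉ π ∧ InsertPart μ ⟨t * η, false⟩ π)

/-- `μ` has a `(k-2)`-band belonging to `[(t-1)η, \overline{(t+1)η})` of type N. -/
def HasTypeNBand (η r k t : ℕ) (μ : List OPart) : Prop :=
  ∃ i, BandInO η t μ (k - 2) i ∧ TypeN η r t μ (k - 2) i

/-- The `(k-1)`-augmentation `C_t` as a relation: `π = C_t(μ)`. -/
def CtRel (η r k t : ℕ) (μ π : List OPart) : Prop :=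
  (HasTypeNBand η r k t μ ∧ InsertPart μ ⟨t * η, false⟩ π) ∨
  (¬ HasTypeNBand η r k t μ ∧ InsertPart μ ⟨t * η, true⟩ π)

/-- `B₁`-type overpartitions: conditions (1)–(4), no overlined part divisible
by `η`, and at most `r - 1` parts not exceeding `η`. -/
def InB1over (α : ℕ → ℕ) (lam η k r : ℕ) (π : List OPart) : Prop :=
  InBbar α lam η k r π ∧ (∀ p ∈ π, p.isOver = true → ¬ η ∣ p.size) ∧ fLe η π < r

/-- `D_η`: partitions into distinct parts divisible by `η`. -/
def InD (η : ℕ) (τ : List ℕ) : Prop :=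
  List.Pairwise (· > ·) τ ∧ ∀ x ∈ τ, 0 < x ∧ η ∣ x

/-- Bressoud's class `B₁(α_1,…,α_λ; η,k,r)` of ordinary partitions. -/
def InB1nat (α : ℕ → ℕ) (lam η k r : ℕ) (σ : List ℕ) : Prop :=
  List.Pairwise (· ≥ ·) σ ∧ (∀ x ∈ σ, 0 < x) ∧
  (∀ x ∈ σ, x % η = 0 ∨ ∃ s, 1 ≤ s ∧ s ≤ lam ∧ x % η = α s) ∧
  (∀ x : ℕ, ¬ η ∣ x → σ.count x ≤ 1) ∧
  (∀ i, i + k ≤ σ.length →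
    σ.getD (i + k - 1) 0 + η ≤ σ.getD i 0 ∧
    (η ∣ σ.getD i 0 → σ.getD (i + k - 1) 0 + η < σ.getD i 0)) ∧
  σ.countP (fun x => decide (x ≤ η)) < r

/-- The class `Ā₀(α_1,…,α_λ; η,k,r)`. Congruence conditions involving `η/2`
are stated with sizes doubled. -/
def InA0 (α : ℕ → ℕ) (lam η k r : ℕ) (π : List OPart) : Prop :=
  IsOverPartition π ∧
  CongParts α lam η π ∧
  (Even lam →
    ∀ p ∈ π, p.isOver = false →
      η ∣ p.size ∧
      ¬ (2 * η * (2 * k - lam - 1) ∣ 2 * p.size) ∧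
      2 * p.size % (2 * η * (2 * k - lam - 1)) ≠ η * (2 * r - lam) ∧
      2 * p.size % (2 * η * (2 * k - lam - 1)) ≠
        2 * η * (2 * k - lam - 1) - η * (2 * r - lam)) ∧
  (¬ Even lam →
    (∀ p ∈ π, p.isOver = false →
      η ∣ 2 * p.size ∧
      p.size % (2 * η) ≠ η ∧
      ¬ (2 * η * (2 * k - lam - 1) ∣ 2 * p.size) ∧
      2 * p.size % (2 * η * (2 * k - lam - 1)) ≠ η * (2 * r - lam) ∧
      2 * p.size % (2 * η * (2 * k - lam - 1)) ≠
        2 * η * (2 * k - lam - 1) - η * (2 * r - lam)) ∧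
    (∀ p ∈ π, p.isOver = true → 2 * p.size % (2 * η) ≠ η))

/-! Removing the part `p = tη` from `π` can only destroy `(k-1)`-bands, never create new ones:
a `(k-1)`-band of `μ` reaching past the position of `p` would, together with `p`, either
violate the difference condition of `π` or give a band of `π` starting below `g(π) ≥ p`.
So the bands of `μ` are bands of `π` lying above `p`; they keep their parity, and their
first parts lie at least `η` above `p`, which is `g(μ) ≥ \overline{(t+1)η}`. Condition (5)
holds for `μ` because `g(π) ≥ p` rules out `f_{≤η}(μ) = r`. -/

lemma OPart.eq_of_val_eq {p q : OPart} (hp : 0 < p.size) (h : q.val = p.val) : q = p := by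
  obtain ⟨s, a⟩ := p
  obtain ⟨s', b⟩ := q
  simp only [OPart.val, OPart.mk.injEq] at h hp ⊢
  cases a <;> cases b <;> simp at h ⊢ <;> omega

lemma OPart.val_le_two_mul_size (p : OPart) : p.val ≤ 2 * p.size := by
  unfold OPart.val; omega

lemma OPart.two_mul_size_le_val_add_one (p : OPart) : 2 * p.size ≤ p.val + 1 := by
  unfold OPart.val; split <;> omega

lemma pval_of_length_le {π : List OPart} {i : ℕ} (h : π.length ≤ i) : pval π i = 0 := by
  rw [pval, List.getD_eq_default _ _ h]
  rfl

lemma antitone_pval {π : List OPart} (h : π.Pairwise fun p q : OPart => q.val ≤ p.val) :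
    Antitone (pval π) := by
  intro a c hac
  rcases lt_or_ge c π.length with hc | hc
  · rcases hac.lt_or_eq with hlt | rfl
    · simp only [pval, List.getD_eq_getElem _ _ hc, List.getD_eq_getElem _ _ (hlt.trans hc)]
      exact List.pairwise_iff_getElem.mp h a c (hlt.trans hc) hc hlt
    · exact le_rfl
  · simp [pval_of_length_le hc]

lemma pval_ne_of_notMem {π : List OPart} {p : OPart} (hp : 0 < p.size) (h : p ∉ π) (i : ℕ) :
    pval π i ≠ p.val := by
  intro hv
  rcases lt_or_ge i π.length with hi | hi
  · rw [pval, List.getD_eq_getElem _ _ hi] at hv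
    exact h (OPart.eq_of_val_eq hp hv ▸ List.getElem_mem hi)
  · have := p.two_mul_size_le_val_add_one
    rw [pval_of_length_le hi] at hv
    omega

lemma IsOverPartition.sublist {π μ : List OPart} (h : IsOverPartition π) (hs : μ.Sublist π) :
    IsOverPartition μ :=
  ⟨h.1.sublist hs, fun q hq => h.2.1 q (hs.subset hq), fun s => (hs.count_le _).trans (h.2.2 s)⟩

def DifferenceCondition (η k : ℕ) (π : List OPart) : Prop :=
  ∀ i, i + k ≤ π.length →
    pval π (i + k - 1) + 2 * η ≤ pval π i ∧
    (pover π i = false → pval π (i + k - 1) + 2 * η < pval π i)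

lemma GGe.mono {η k x y : ℕ} {π : List OPart} (h : GGe η k π y) (hxy : x ≤ y) : GGe η k π x :=
  fun i hb => hxy.trans (h i hb)

section RemovePart

variable {η k : ℕ} {l₁ l₂ : List OPart} {p : OPart} {i : ℕ}

lemma sublist_append_cons : (l₁ ++ l₂).Sublist (l₁ ++ p :: l₂) :=
  (List.sublist_cons_self p l₂).append_left l₁

lemma length_append_cons : (l₁ ++ p :: l₂).length = (l₁ ++ l₂).length + 1 := by
  simp; omega

lemma wt_append_cons : wt (l₁ ++ p :: l₂) = wt (l₁ ++ l₂) + p.size := by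
  simp [wt]; omega

lemma countP_append_cons_of_neg {f : OPart → Bool} (hf : f p = false) :
    (l₁ ++ p :: l₂).countP f = (l₁ ++ l₂).countP f := by
  simp [List.countP_append, hf]

lemma getD_append_cons_of_lt (h : i < l₁.length) (d : OPart) :
    (l₁ ++ p :: l₂).getD i d = (l₁ ++ l₂).getD i d := by
  rw [List.getD_append _ _ _ _ h, List.getD_append _ _ _ _ h]

lemma getD_append_cons_succ (h : l₁.length ≤ i) (d : OPart) :
    (l₁ ++ p :: l₂).getD (i + 1) d = (l₁ ++ l₂).getD i d := by
  rw [List.getD_append_right _ _ _ _ h, List.getD_append_right _ _ _ _ (by omega),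
    show i + 1 - l₁.length = i - l₁.length + 1 by omega, List.getD_cons_succ]

lemma pval_append_cons_of_lt (h : i < l₁.length) :
    pval (l₁ ++ p :: l₂) i = pval (l₁ ++ l₂) i := by
  simp only [pval, getD_append_cons_of_lt h]

lemma pover_append_cons_of_lt (h : i < l₁.length) :
    pover (l₁ ++ p :: l₂) i = pover (l₁ ++ l₂) i := by
  simp only [pover, getD_append_cons_of_lt h]

lemma psize_append_cons_of_lt (h : i < l₁.length) :
    psize (l₁ ++ p :: l₂) i = psize (l₁ ++ l₂) i := by
  simp only [psize, getD_append_cons_of_lt h]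

lemma pval_append_cons_succ (h : l₁.length ≤ i) :
    pval (l₁ ++ p :: l₂) (i + 1) = pval (l₁ ++ l₂) i := by
  simp only [pval, getD_append_cons_succ h]

lemma pover_append_cons_succ (h : l₁.length ≤ i) :
    pover (l₁ ++ p :: l₂) (i + 1) = pover (l₁ ++ l₂) i := by
  simp only [pover, getD_append_cons_succ h]

lemma pval_append_cons_length : pval (l₁ ++ p :: l₂) l₁.length = p.val := by
  simp [pval]

lemma IsOverPartition.notMem_of_isOver (h : IsOverPartition (l₁ ++ p :: l₂))
    (hp : p.isOver = true) : p ∉ l₁ ++ l₂ := by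
  intro hmem
  have hcount := h.2.2 p.size
  rw [show (⟨p.size, true⟩ : OPart) = p by cases p; simp_all] at hcount
  have := List.count_pos_iff.mpr hmem
  simp only [List.count_append, List.count_cons_self] at hcount this
  omega

lemma DifferenceCondition.remove (hk : 0 < k)
    (hsort : (l₁ ++ p :: l₂).Pairwise fun p q : OPart => q.val ≤ p.val)
    (h : DifferenceCondition η k (l₁ ++ p :: l₂)) : DifferenceCondition η k (l₁ ++ l₂) := by
  intro i hi
  have hlen := length_append_cons (l₁ := l₁) (l₂ := l₂) (p := p)
  rcases lt_or_ge (i + k - 1) l₁.length with hend | hend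
  · have := h i (by omega)
    rwa [pval_append_cons_of_lt hend, pval_append_cons_of_lt (show i < l₁.length by omega),
      pover_append_cons_of_lt (show i < l₁.length by omega)] at this
  rcases lt_or_ge i l₁.length with hstart | hstart
  · -- the window of `μ` at `i` is a window of `k + 1` parts of `π`
    have hmono := antitone_pval hsort (show i + k - 1 ≤ i + k - 1 + 1 by omega)
    obtain ⟨h₁, h₂⟩ := h i (by omega)
    rw [pval_append_cons_succ hend] at hmono
    rw [pval_append_cons_of_lt hstart] at h₁ h₂
    rw [pover_append_cons_of_lt hstart] at h₂
    exact ⟨by omega, fun ho => by have := h₂ ho; omega⟩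
  · have := h (i + 1) (by omega)
    rwa [show i + 1 + k - 1 = i + k - 1 + 1 by omega, pval_append_cons_succ hend,
      pval_append_cons_succ hstart, pover_append_cons_succ hstart] at this

lemma IsBand.append_cons_of_le {m : ℕ} (hm : 0 < m) (hi : i + m ≤ l₁.length)
    (hb : IsBand η (l₁ ++ l₂) m i) : IsBand η (l₁ ++ p :: l₂) m i := by
  unfold IsBand
  rw [length_append_cons, pval_append_cons_of_lt (show i < l₁.length by omega),
    pval_append_cons_of_lt (show i + m - 1 < l₁.length by omega),
    pover_append_cons_of_lt (show i < l₁.length by omega)]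
  exact ⟨by have := hb.1; omega, hb.2⟩

lemma IsBand.append_cons_succ {m : ℕ} (hm : 0 < m) (hi : l₁.length ≤ i)
    (hb : IsBand η (l₁ ++ l₂) m i) : IsBand η (l₁ ++ p :: l₂) m (i + 1) := by
  unfold IsBand
  rw [length_append_cons, show i + 1 + m - 1 = i + m - 1 + 1 by omega,
    pval_append_cons_succ hi, pval_append_cons_succ (show l₁.length ≤ i + m - 1 by omega),
    pover_append_cons_succ hi]
  exact ⟨by have := hb.1; omega, hb.2⟩

lemma bandSum_append_cons_of_le {m : ℕ} (hi : i + m ≤ l₁.length) :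
    bandSum η (l₁ ++ p :: l₂) i m = bandSum η (l₁ ++ l₂) i m :=
  Finset.sum_congr rfl fun l hl => by
    rw [psize_append_cons_of_lt (by have := Finset.mem_range.mp hl; omega)]

lemma Vbar_append_cons (hdvd : η ∣ p.size) (N : ℕ) :
    Vbar η (l₁ ++ p :: l₂) N = Vbar η (l₁ ++ l₂) N :=
  countP_append_cons_of_neg (by simp [Nat.mod_eq_zero_of_dvd hdvd])

lemma add_le_length_of_isBand_remove (hk : 2 ≤ k) (hπ : IsOverPartition (l₁ ++ p :: l₂))
    (hg : GGe η k (l₁ ++ p :: l₂) p.val) (hd : DifferenceCondition η k (l₁ ++ p :: l₂))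
    (hb : IsBand η (l₁ ++ l₂) (k - 1) i) : i + (k - 1) ≤ l₁.length := by
  have hp : 0 < p.size := hπ.2.1 p (by simp)
  by_contra! hj
  rcases lt_or_ge i l₁.length with hi | hi
  · -- together with `p` the band would be `k` parts of `π` within distance `η`
    obtain ⟨hlen, hle, hlt⟩ := hb
    obtain ⟨h₁, h₂⟩ := hd i (by rw [length_append_cons]; omega)
    rw [show i + k - 1 = i + (k - 1) - 1 + 1 by omega,
      pval_append_cons_succ (show l₁.length ≤ i + (k - 1) - 1 by omega),
      pval_append_cons_of_lt hi] at h₁ h₂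
    rw [pover_append_cons_of_lt hi] at h₂
    cases ho : pover (l₁ ++ l₂) i
    · have := h₂ ho; omega
    · have := hlt ho; omega
  · -- otherwise it shifts to a band of `π` starting at a part `≥ p` lying after `p`
    have hbπ := hb.append_cons_succ (p := p) (by omega) hi
    have hanti := antitone_pval hπ.1
    have hv : pval (l₁ ++ p :: l₂) (i + 1) = p.val :=
      le_antisymm (pval_append_cons_length (l₂ := l₂) ▸ hanti (by omega)) (hg _ hbπ)
    cases ho : p.isOver
    · have hvi : pval (l₁ ++ p :: l₂) i = p.val :=
        le_antisymm (pval_append_cons_length (l₂ := l₂) ▸ hanti hi) (hv ▸ hanti (by omega))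
      have hoi : pover (l₁ ++ p :: l₂) i = false := by
        rwa [pover, OPart.eq_of_val_eq hp hvi]
      have h₁ := (hd i (by have := hbπ.1; omega)).2 hoi
      have h₂ := hbπ.2.1
      rw [show i + 1 + (k - 1) - 1 = i + k - 1 by omega] at h₂
      omega
    · exact pval_ne_of_notMem hp (hπ.notMem_of_isOver ho) i
        (pval_append_cons_succ (p := p) hi ▸ hv)

lemma gGe_remove (hk : 2 ≤ k) (hπ : IsOverPartition (l₁ ++ p :: l₂))
    (hg : GGe η k (l₁ ++ p :: l₂) p.val) (hd : DifferenceCondition η k (l₁ ++ p :: l₂)) :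
    GGe η k (l₁ ++ l₂) (p.val + 2 * η) := by
  intro i hb
  have hi := add_le_length_of_isBand_remove hk hπ hg hd hb
  have h₁ := (hd i (by simp; omega)).1
  have h₂ : p.val ≤ pval (l₁ ++ p :: l₂) (i + k - 1) :=
    pval_append_cons_length (l₂ := l₂) ▸ antitone_pval hπ.1 (by omega)
  rw [← pval_append_cons_of_lt (p := p) (by omega)]
  omega

lemma evenBand_remove {r : ℕ} (hk : 2 ≤ k) (hπ : IsOverPartition (l₁ ++ p :: l₂))
    (hg : GGe η k (l₁ ++ p :: l₂) p.val)
    (hd : DifferenceCondition η k (l₁ ++ p :: l₂)) (hdvd : η ∣ p.size)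
    (heven : ∀ i, IsBand η (l₁ ++ p :: l₂) (k - 1) i → EvenBand η r (l₁ ++ p :: l₂) (k - 1) i)
    (hb : IsBand η (l₁ ++ l₂) (k - 1) i) : EvenBand η r (l₁ ++ l₂) (k - 1) i := by
  have hi := add_le_length_of_isBand_remove hk hπ hg hd hb
  have hend : i + (k - 1) - 1 < l₁.length := by omega
  -- an overlined `p` lies strictly below the last part of the band
  have hObar : Obar η (l₁ ++ p :: l₂) (pval (l₁ ++ p :: l₂) (i + (k - 1) - 1)) =
      Obar η (l₁ ++ l₂) (pval (l₁ ++ p :: l₂) (i + (k - 1) - 1)) := by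
    refine countP_append_cons_of_neg ?_
    cases ho : p.isOver
    · simp
    · have hle : p.val ≤ pval (l₁ ++ p :: l₂) (i + (k - 1) - 1) :=
        pval_append_cons_length (l₂ := l₂) ▸ antitone_pval hπ.1 hend.le
      have hne := pval_ne_of_notMem (hπ.2.1 p (by simp)) (hπ.notMem_of_isOver ho)
        (i + (k - 1) - 1)
      rw [pval_append_cons_of_lt hend] at hle ⊢
      simp only [Bool.true_and, Bool.and_eq_false_iff, decide_eq_false_iff_not]
      omega
  have := heven i (hb.append_cons_of_le (by omega) hi)
  unfold EvenBand at this ⊢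
  rwa [bandSum_append_cons_of_le hi, Vbar_append_cons hdvd, hObar,
    pval_append_cons_of_lt (by omega), pval_append_cons_of_lt hend] at this

lemma cond5_remove {r : ℕ} (hπ : IsOverPartition (l₁ ++ p :: l₂))
    (hg : GGe η k (l₁ ++ p :: l₂) p.val) (hdvd : η ∣ p.size) (hfle : fLe η (l₁ ++ p :: l₂) ≤ r)
    (hc5 : Cond5 η k r (l₁ ++ p :: l₂)) : Cond5 η k r (l₁ ++ l₂) := by
  intro hr hημ
  exfalso
  have hfle' : fLe η (l₁ ++ p :: l₂) = fLe η (l₁ ++ l₂) + if p.val ≤ 2 * η then 1 else 0 := by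
    simp only [fLe, List.countP_append, List.countP_cons, decide_eq_true_eq]; omega
  split_ifs at hfle' with hsmall
  · omega
  -- a part `p > η` divisible by `η` is at least `2η`, while condition (5) for `π` gives a band
  -- starting below `2η`, hence below `g(π) ≥ p`
  have hsize : 2 * η ≤ p.size := by
    obtain ⟨c, hc⟩ := hdvd
    have := p.val_le_two_mul_size
    rw [hc] at this ⊢
    rcases c with _ | _ | c <;> nlinarith
  have hηπ : (⟨η, true⟩ : OPart) ∉ l₁ ++ p :: l₂ := by
    simp only [List.mem_append, List.mem_cons] at hημ ⊢
    rintro (h | rfl | h)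
    · exact hημ (Or.inl h)
    · simp [OPart.val] at hsmall
    · exact hημ (Or.inr h)
  obtain ⟨i, hb, hi⟩ := hc5 (by omega) hηπ
  have := hg i hb
  have := p.two_mul_size_le_val_add_one
  omega

end RemovePart

theorem InB0.remove {α : ℕ → ℕ} {lam η k r : ℕ} {l₁ l₂ : List OPart} {p : OPart} (hk : 2 ≤ k)
    (h : InB0 α lam η k r (l₁ ++ p :: l₂)) (hdvd : η ∣ p.size)
    (hg : GGe η k (l₁ ++ p :: l₂) p.val) :
    InB0 α lam η k r (l₁ ++ l₂) ∧ GGe η k (l₁ ++ l₂) (p.val + 2 * η) := by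
  obtain ⟨⟨hπ, hcong, hover, hd, hfle⟩, hc5, heven⟩ := h
  have hsub := sublist_append_cons (l₁ := l₁) (l₂ := l₂) (p := p)
  refine ⟨⟨⟨hπ.sublist hsub, fun q hq => hcong q (hsub.subset hq),
    fun q hq => hover q (hsub.subset hq), DifferenceCondition.remove (by omega) hπ.1 hd,
    hsub.countP_le.trans hfle⟩, cond5_remove hπ hg hdvd hfle hc5,
    fun i hb => evenBand_remove hk hπ hg hd hdvd heven hb⟩, gGe_remove hk hπ hg hd⟩

lemma SEq.sGt_of_notMem {η t : ℕ} {π μ : List OPart} (h : SEq η t π) (hs : μ ⊆ π)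
    (hnot : (⟨t * η, true⟩ : OPart) ∉ μ) : SGt η t μ := by
  intro q hq ho hd
  refine (h.2 q (hs hq) ho hd).lt_of_ne fun he => hnot ?_
  rwa [show (⟨t * η, true⟩ : OPart) = q by cases q; simp_all]

theorem stmt_8_general (α : ℕ → ℕ) (lam η k r : ℕ)
    (hlk : lam + 1 < k)
    (t : ℕ) (π μ : List OPart)
    (hπ : InBeq α lam η k r t π) (hD : DtRel η t π μ) :
    InBgt α lam η k r t μ ∧ wt π = wt μ + t * η ∧ π.length = μ.length + 1 := by
  have hk : 2 ≤ k := by omega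
  have hbound : 2 * ((t + 1) * η) - 1 ≤ 2 * (t * η) - 1 + 2 * η := by
    rw [add_one_mul]; omega
  obtain ⟨hB0, hcase⟩ := hπ
  rcases hD with ⟨hmem, l₁, l₂, rfl, rfl⟩ | ⟨hnmem, l₁, l₂, rfl, rfl⟩
  · obtain ⟨hs, hg⟩ := hcase.resolve_right fun h => (h.1 _ hmem rfl (dvd_mul_left η t)).false
    obtain ⟨hμ, hgμ⟩ := hB0.remove hk (dvd_mul_left η t) hg
    exact ⟨⟨hμ, hs.sGt_of_notMem sublist_append_cons.subset
      (hB0.1.1.notMem_of_isOver rfl), hgμ.mono hbound⟩, wt_append_cons, length_append_cons⟩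
  · obtain ⟨hs, hg, -⟩ := hcase.resolve_left fun h => hnmem h.1.1
    obtain ⟨hμ, hgμ⟩ := hB0.remove hk (dvd_mul_left η t) hg
    exact ⟨⟨hμ, fun q hq => hs q (sublist_append_cons.subset hq),
      hgμ.mono (by simp [OPart.val]; omega)⟩, wt_append_cons, length_append_cons⟩

theorem stmt_8 (α : ℕ → ℕ) (lam η k r : ℕ)
    (hη : 0 < η)
    (hαpos : ∀ i, 1 ≤ i → i ≤ lam → 0 < α i ∧ α i < η)
    (hαmono : ∀ i j, 1 ≤ i → i < j → j ≤ lam → α i < α j)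
    (hαsym : ∀ i, 1 ≤ i → i ≤ lam → α i = η - α (lam + 1 - i))
    (hrk : r < k) (hlr : lam ≤ r) (hlk : lam + 1 < k)
    (t : ℕ) (ht : 1 ≤ t) (π μ : List OPart)
    (hπ : InBeq α lam η k r t π) (hD : DtRel η t π μ) :
    InBgt α lam η k r t μ ∧ wt π = wt μ + t * η ∧ π.length = μ.length + 1 :=
  stmt_8_general α lam η k r hlk t π μ hπ hD
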